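/- Let U be a nonempty finite type, X take values in {A,B}, and let p be a joint pmf of (U,X) with P(X=x, U=u)>0 for every u and x. Let Q be generated by the kernel w({x}|u,x) = π(x)/P(X=x|U=u), w(q'|u,x)=0 for the other singleton q', and w(qAB|u,x) = 1 − π(x)/P(X=x|U=u), where π(x) = min over u of P(X=x|U=u). Then for every u, P(Q={x} | U=u) = π(x) and P(Q=qAB | U=u) = 1 − π(A) − π(B); in particular Q is statistically independent of U. -/

import Mathlib

/-- The two sources. -/
inductive Src | A | B
deriving DecidableEq

instance : Fintype Src := ⟨{Src.A, Src.B}, by intro x; cases x <;> simp⟩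

/-- The three possible queries: only source A, only source B, or both. -/
inductive Qry | qA | qB | qAB
deriving DecidableEq

instance : Fintype Qry := ⟨{Qry.qA, Qry.qB, Qry.qAB}, by intro x; cases x <;> simp⟩

/-- The singleton query associated to a source. -/
def singletonQ : Src → Qry
  | Src.A => Qry.qA
  | Src.B => Qry.qB

/-- The conditional probability `P(X = x | U = u)` derived from the joint pmf `p` of `(U,X)`. -/
noncomputable def condP {U : Type} [Fintype U] (p : U → Src → ℝ) (x : Src) (u : U) : ℝ :=
  p u x / (∑ x', p u x')

/-- `π(x) = min_u P(X = x | U = u)`. -/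
noncomputable def piMin {U : Type} [Fintype U] [Nonempty U] (p : U → Src → ℝ) (x : Src) : ℝ :=
  Finset.univ.inf' Finset.univ_nonempty (fun u => condP p x u)

/-- The ON-OFF privacy query kernel: `w({x}|u,x) = π(x)/P(X=x|U=u)`, the other singleton gets
probability `0`, and `w(qAB|u,x) = 1 - π(x)/P(X=x|U=u)`. -/
noncomputable def kernel {U : Type} [Fintype U] [Nonempty U] (p : U → Src → ℝ)
    (u : U) (x : Src) (q : Qry) : ℝ :=
  if q = singletonQ x then piMin p x / condP p x u
  else if q = Qry.qAB then 1 - piMin p x / condP p x u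
  else 0

/-! The weight `π(x) / P(X = x | U = u)` cancels the conditional probability it is averaged
against: `P(Q = {x} | U = u) = P(X = x | U = u) · π(x) / P(X = x | U = u) = π(x)`, and `qAB`
receives the remaining mass. So the conditional law of `Q` does not depend on `u`, and a
conditional law common to all `u` is the marginal law. -/

theorem Src.sum_univ {M : Type*} [AddCommMonoid M] (f : Src → M) :
    ∑ x, f x = f Src.A + f Src.B := by
  rw [show (Finset.univ : Finset Src) = {Src.A, Src.B} from rfl, Finset.sum_pair (by decide)]

theorem Src.sum_pos {p : Src → ℝ} (hpos : ∀ x, 0 < p x) : 0 < ∑ x, p x :=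
  Finset.sum_pos (fun x _ => hpos x) ⟨Src.A, Finset.mem_univ _⟩

/-- The common conditional law of `Q` given `U = u`, for every `u`. -/
noncomputable def queryLaw {U : Type} [Fintype U] [Nonempty U] (p : U → Src → ℝ) : Qry → ℝ
  | Qry.qA => piMin p Src.A
  | Qry.qB => piMin p Src.B
  | Qry.qAB => 1 - piMin p Src.A - piMin p Src.B

theorem queryLaw_singletonQ {U : Type} [Fintype U] [Nonempty U] (p : U → Src → ℝ) (x : Src) :
    queryLaw p (singletonQ x) = piMin p x := by
  cases x <;> rfl

theorem mul_div_condP {U : Type} [Fintype U] {p : U → Src → ℝ} {u : U} {x : Src}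
    (hp : p u x ≠ 0) (hs : ∑ x', p u x' ≠ 0) (c : ℝ) :
    p u x * (c / condP p x u) = (∑ x', p u x') * c := by
  rw [condP]
  field_simp

theorem sum_mul_kernel {U : Type} [Fintype U] [Nonempty U] {p : U → Src → ℝ}
    (hpos : ∀ u x, 0 < p u x) (u : U) (q : Qry) :
    ∑ x', p u x' * kernel p u x' q = (∑ x', p u x') * queryLaw p q := by
  have hs : ∑ x', p u x' ≠ 0 := (Src.sum_pos (hpos u)).ne'
  have hdiv : ∀ x, p u x * (piMin p x / condP p x u) = (∑ x', p u x') * piMin p x :=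
    fun x => mul_div_condP (hpos u x).ne' hs _
  cases q <;>
    simp only [Src.sum_univ, kernel, singletonQ, queryLaw, reduceCtorEq, if_true, if_false,
      mul_zero, add_zero, zero_add, mul_sub, mul_one, hdiv]
  ring

theorem eq_mul_sum_of_forall_eq_mul {ι : Type*} [Fintype ι] {f s : ι → ℝ} {c : ℝ}
    (h : ∀ i, f i = s i * c) (hs : ∑ i, s i = 1) (i : ι) : f i = s i * ∑ j, f j := by
  rw [Finset.sum_congr rfl fun j _ => h j, ← Finset.sum_mul, hs, one_mul, h]

/-- Under the ON-OFF privacy kernel, for every `u` we have `P(Q={x} | U=u) = π(x)` and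
`P(Q=qAB | U=u) = 1 - π(A) - π(B)`; in particular `Q` is statistically independent of `U`. -/
theorem kernel_private {U : Type} [Fintype U] [Nonempty U]
    (p : U → Src → ℝ)
    (hpos : ∀ u x, 0 < p u x)
    (hsum : ∑ u, ∑ x, p u x = 1) :
    (∀ u, ∀ x : Src,
      (∑ x', p u x' * kernel p u x' (singletonQ x)) / (∑ x', p u x') = piMin p x) ∧
    (∀ u, (∑ x', p u x' * kernel p u x' Qry.qAB) / (∑ x', p u x')
      = 1 - piMin p Src.A - piMin p Src.B) ∧
    (∀ u q, ∑ x', p u x' * kernel p u x' q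
      = (∑ x', p u x') * (∑ u', ∑ x', p u' x' * kernel p u' x' q)) := by
  have hcond : ∀ u q, (∑ x', p u x' * kernel p u x' q) / (∑ x', p u x') = queryLaw p q :=
    fun u q => by
      rw [sum_mul_kernel hpos, mul_div_cancel_left₀ _ (Src.sum_pos (hpos u)).ne']
  refine ⟨fun u x => ?_, fun u => hcond u Qry.qAB, fun u q => ?_⟩
  · rw [hcond, queryLaw_singletonQ]
  · exact eq_mul_sum_of_forall_eq_mul (fun u => sum_mul_kernel hpos u q) hsum u
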